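/- Let $N = 2M$ and let $\lambda_1, \ldots, \lambda_N$ be distinct real numbers. Define the antisymmetric matrix $\mathbf{S}(\boldsymbol\lambda) = \left[\frac{(\lambda_n^M - \lambda_m^M)^2}{\lambda_n - \lambda_m}\right]_{m,n=1}^N$ (with diagonal entries $0$). Then $\mathrm{Pf}\,\mathbf{S}(\boldsymbol\lambda) = \prod_{m<n}(\lambda_n - \lambda_m)$. -/

import Mathlib

/-- The Pfaffian of a `2M × 2M` real matrix. -/
noncomputable def pf {M : ℕ} (A : Matrix (Fin (2*M)) (Fin (2*M)) ℝ) : ℝ :=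
  (1 / (2^M * (Nat.factorial M) : ℝ)) *
    ∑ σ : Equiv.Perm (Fin (2*M)), ((Equiv.Perm.sign σ : ℤ) : ℝ) *
      ∏ m : Fin M,
        A (σ ⟨2*(m:ℕ), by have := m.isLt; omega⟩) (σ ⟨2*(m:ℕ)+1, by have := m.isLt; omega⟩)

/-! Write `S = W J Wᵀ`, where `W` is the Vandermonde matrix of `l` with its columns (exponents)
reordered as `0, 2M-1, 1, 2M-2, …, M-1, M` and `J` pairs column `2k` with column `2k+1`; this is
the identity `(v - u) ∑_{k<M} (u^k v^(2M-1-k) - u^(2M-1-k) v^k) = (v^M - u^M)^2`.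
The Pfaffian satisfies `Pf (B A Bᵀ) = det B · Pf A`, `Pf J = 1`, and the reordering of the
columns is an even permutation, so `Pf S = det W` is the Vandermonde determinant. -/

open Equiv Finset Matrix
open scoped Kronecker

lemma sum_pow_mul_pow_sub_mul_sub {R : Type*} [CommRing R] (u v : R) (M : ℕ) :
    (∑ k ∈ range M, (u ^ k * v ^ (2 * M - 1 - k) - u ^ (2 * M - 1 - k) * v ^ k)) * (v - u) =
      (v ^ M - u ^ M) ^ 2 := by
  have split : ∀ k ∈ range M, u ^ k * v ^ (2 * M - 1 - k) - u ^ (2 * M - 1 - k) * v ^ k =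
      v ^ M * (u ^ k * v ^ (M - 1 - k)) - u ^ M * (v ^ k * u ^ (M - 1 - k)) := by
    intro k hk
    rw [mem_range] at hk
    rw [show 2 * M - 1 - k = M + (M - 1 - k) by omega, pow_add, pow_add]
    ring
  rw [Finset.sum_congr rfl split, Finset.sum_sub_distrib, ← Finset.mul_sum, ← Finset.mul_sum,
    geom_sum₂_comm u v]
  linear_combination (v ^ M - u ^ M) * geom_sum₂_mul v u M

def finPairEquiv (M : ℕ) : Fin M × Fin 2 ≃ Fin (2 * M) :=
  finProdFinEquiv.trans (finCongr (mul_comm M 2))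

@[simp]
lemma finPairEquiv_val {M : ℕ} (x : Fin M × Fin 2) :
    (finPairEquiv M x : ℕ) = 2 * x.1 + x.2 := by
  simp only [finPairEquiv, Equiv.trans_apply, finCongr_apply, Fin.val_cast,
    finProdFinEquiv_apply_val]
  ring

noncomputable def finFoldPerm (M : ℕ) : Perm (Fin (2 * M)) :=
  .ofBijective
    (fun j => ⟨if (j : ℕ) % 2 = 0 then j / 2 else 2 * M - 1 - j / 2, by split_ifs <;> omega⟩)
    (Finite.injective_iff_bijective.mp fun i j h => by
      simp only [Fin.mk.injEq] at h
      ext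
      split_ifs at h <;> omega)

lemma finFoldPerm_val {M : ℕ} (j : Fin (2 * M)) :
    (finFoldPerm M j : ℕ) =
      if (j : ℕ) % 2 = 0 then (j : ℕ) / 2 else 2 * M - 1 - (j : ℕ) / 2 :=
  rfl

lemma finFoldPerm_finPairEquiv_zero {M : ℕ} (k : Fin M) :
    (finFoldPerm M (finPairEquiv M (k, 0)) : ℕ) = k := by
  simp only [finFoldPerm_val, finPairEquiv_val, Fin.val_zero]
  split_ifs <;> omega

lemma finFoldPerm_finPairEquiv_one {M : ℕ} (k : Fin M) :
    (finFoldPerm M (finPairEquiv M (k, 1)) : ℕ) = 2 * M - 1 - k := by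
  simp only [finFoldPerm_val, finPairEquiv_val, Fin.val_one]
  split_ifs <;> omega

-- Counting inversions: the value at an even position is smaller than all later ones, the value
-- at an odd position `j` is larger than all `2M - 1 - j` later ones, an even number.
lemma sign_finFoldPerm (M : ℕ) : Perm.sign (finFoldPerm M) = 1 := by
  rw [Perm.sign_eq_prod_prod_Ioi]
  refine Finset.prod_eq_one fun i _ => ?_
  by_cases hi : (i : ℕ) % 2 = 0
  · refine Finset.prod_eq_one fun j hj => if_pos ?_
    rw [mem_Ioi, Fin.lt_def] at hj
    rw [Fin.lt_def, finFoldPerm_val, finFoldPerm_val]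
    split_ifs <;> omega
  · rw [Finset.prod_congr rfl fun j hj => if_neg ?_, prod_const, Fin.card_Ioi]
    · exact Even.neg_one_pow ⟨M - 1 - i / 2, by omega⟩
    · rw [mem_Ioi, Fin.lt_def] at hj
      rw [Fin.lt_def, finFoldPerm_val, finFoldPerm_val]
      split_ifs <;> omega

section PairPerm

variable {ι : Type*}

def pairPerm (π : Perm ι) (ε : ι → Perm (Fin 2)) : Perm (ι × Fin 2) :=
  prodCongrLeft (fun _ => π) * prodCongrRight ε

@[simp]
lemma pairPerm_apply (π : Perm ι) (ε : ι → Perm (Fin 2)) (x : ι × Fin 2) :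
    pairPerm π ε x = (π x.1, ε x.1 x.2) := rfl

lemma pairPerm_injective :
    Function.Injective fun p : Perm ι × (ι → Perm (Fin 2)) => pairPerm p.1 p.2 := by
  rintro ⟨π, ε⟩ ⟨π', ε'⟩ h
  have h' := fun x => congrArg (· x) h
  simp only [pairPerm_apply, Prod.mk.injEq] at h'
  exact Prod.ext (Equiv.ext fun i => (h' (i, 0)).1)
    (funext fun i => Equiv.ext fun b => (h' (i, b)).2)

lemma exists_pairPerm_eq [Finite ι] (σ : Perm (ι × Fin 2))
    (hσ : ∀ i, (σ (i, 0)).1 = (σ (i, 1)).1) : ∃ π ε, pairPerm π ε = σ := by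
  have fst_eq : ∀ i b, (σ (i, b)).1 = (σ (i, 0)).1 := by
    intro i b
    fin_cases b
    · rfl
    · exact (hσ i).symm
  have snd_inj : ∀ i, Function.Injective fun b => (σ (i, b)).2 := fun i b b' hb =>
    (Prod.ext_iff.1 (σ.injective (Prod.ext (by rw [fst_eq, fst_eq i b']) hb))).2
  have fst_inj : Function.Injective fun i => (σ (i, 0)).1 := by
    intro i j hij
    obtain ⟨b, hb⟩ := Finite.injective_iff_surjective.mp (snd_inj i) (σ (j, 0)).2
    have := σ.injective (Prod.ext (by simp only at hij; rw [fst_eq, hij]) hb)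
    exact (Prod.ext_iff.1 this).1
  exact ⟨.ofBijective _ fst_inj.bijective_of_finite,
    fun i => .ofBijective _ (snd_inj i).bijective_of_finite,
    Equiv.ext fun x => Prod.ext (fst_eq x.1 x.2).symm rfl⟩

lemma sign_pairPerm [Fintype ι] [DecidableEq ι] (π : Perm ι) (ε : ι → Perm (Fin 2)) :
    Perm.sign (pairPerm π ε) = ∏ i, Perm.sign (ε i) := by
  rw [pairPerm, map_mul, Perm.sign_prodCongrLeft, Perm.sign_prodCongrRight, Fin.prod_univ_two,
    Int.units_mul_self, one_mul]

end PairPerm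

namespace Matrix

section Determinant

variable {n R : Type*} [Fintype n] [DecidableEq n] [CommRing R]

lemma det_submatrix_id_eq_zero {B : Matrix n n R} {h : n → n} (hh : ¬ Function.Injective h) :
    (B.submatrix id h).det = 0 := by
  obtain ⟨i, j, hij, hne⟩ : ∃ i j, h i = h j ∧ i ≠ j := by
    simpa [Function.Injective] using hh
  exact det_zero_of_column_eq hne fun k => by simp [hij]

lemma sum_mul_det_submatrix_id (B : Matrix n n R) (c : (n → n) → R) :
    ∑ h : n → n, c h * (B.submatrix id h).det =
      B.det * ∑ τ : Perm n, ((Perm.sign τ : ℤ) : R) * c τ := by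
  rw [← Finset.sum_of_injOn (fun τ : Perm n => ⇑τ) DFunLike.coe_injective.injOn
    (fun _ _ => mem_univ _) (fun h _ hh => ?_) (fun _ _ => rfl), Finset.mul_sum]
  · refine Finset.sum_congr rfl fun τ _ => ?_
    rw [det_permute']
    ring
  · suffices ¬ Function.Injective h by rw [det_submatrix_id_eq_zero this, mul_zero]
    exact fun hinj => hh ⟨Equiv.ofBijective h hinj.bijective_of_finite, by simp, rfl⟩

end Determinant

section Symplectic

variable {ι R : Type*} [DecidableEq ι] [CommRing R]

def pairSymplectic (ι R : Type*) [DecidableEq ι] [CommRing R] :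
    Matrix (ι × Fin 2) (ι × Fin 2) R :=
  1 ⊗ₖ !![0, 1; -1, 0]

lemma symplectic_two_apply_perm (ε : Perm (Fin 2)) :
    !![(0 : R), 1; -1, 0] (ε 0) (ε 1) = ((Perm.sign ε : ℤ) : R) := by
  obtain rfl | rfl : ε = 1 ∨ ε = Equiv.swap 0 1 := by revert ε; decide
  · simp
  · simp

lemma pairSymplectic_apply_pairPerm (π : Perm ι) (ε : ι → Perm (Fin 2)) (i : ι) :
    pairSymplectic ι R (pairPerm π ε (i, 0)) (pairPerm π ε (i, 1)) =
      ((Perm.sign (ε i) : ℤ) : R) := by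
  rw [pairSymplectic, kronecker_apply, pairPerm_apply, pairPerm_apply, one_apply_eq, one_mul,
    symplectic_two_apply_perm]

lemma mul_pairSymplectic_mul_transpose_apply [Fintype ι] {m : Type*} (W : Matrix m (ι × Fin 2) R)
    (x y : m) : (W * pairSymplectic ι R * Wᵀ) x y =
      ∑ i, (W x (i, 0) * W y (i, 1) - W x (i, 1) * W y (i, 0)) := by
  simp [mul_apply, pairSymplectic, one_apply, Fintype.sum_prod_type, Fin.sum_univ_two,
    neg_add_eq_sub]

end Symplectic

section PfaffianSum

variable {ι R : Type*} [Fintype ι] [DecidableEq ι] [CommRing R]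

-- `2^M M!` times the Pfaffian, for the pairing of `(i, 0)` with `(i, 1)`.
def pfaffianSum (A : Matrix (ι × Fin 2) (ι × Fin 2) R) : R :=
  ∑ σ : Perm (ι × Fin 2), ((Perm.sign σ : ℤ) : R) * ∏ i, A (σ (i, 0)) (σ (i, 1))

lemma prod_sum_sum_eq_sum_pairs {n : Type*} [Fintype n] (F : ι → n → n → R) :
    ∏ i, ∑ p, ∑ q, F i p q = ∑ h : ι × Fin 2 → n, ∏ i, F i (h (i, 0)) (h (i, 1)) := by
  simp_rw [← Fintype.sum_prod_type']
  rw [Finset.prod_univ_sum, Fintype.piFinset_univ]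
  exact Fintype.sum_equiv ((Equiv.curry _ _ _).trans
    (Equiv.arrowCongr (Equiv.refl ι) (piFinTwoEquiv fun _ => n))).symm _ _ fun _ => rfl

theorem pfaffianSum_mul_mul_transpose (A B : Matrix (ι × Fin 2) (ι × Fin 2) R) :
    pfaffianSum (B * A * Bᵀ) = B.det * pfaffianSum A := by
  have entry : ∀ x y, (B * A * Bᵀ) x y = ∑ p, ∑ q, B x p * A p q * B y q := by
    intro x y
    simp only [mul_apply, transpose_apply, Finset.sum_mul]
    exact Finset.sum_comm
  calc pfaffianSum (B * A * Bᵀ)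
      = ∑ h : ι × Fin 2 → ι × Fin 2, (∏ i, A (h (i, 0)) (h (i, 1))) *
          (B.submatrix id h).det := by
        simp only [pfaffianSum, entry, prod_sum_sum_eq_sum_pairs, Finset.mul_sum]
        rw [Finset.sum_comm]
        refine Finset.sum_congr rfl fun h _ => ?_
        rw [det_apply', Finset.mul_sum]
        refine Finset.sum_congr rfl fun σ _ => ?_
        simp only [submatrix_apply, id, Fintype.prod_prod_type, Fin.prod_univ_two]
        rw [mul_left_comm, ← Finset.prod_mul_distrib]
        exact congrArg _ (Finset.prod_congr rfl fun i _ => by ring)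
    _ = B.det * pfaffianSum A := by
        rw [sum_mul_det_submatrix_id, pfaffianSum]

-- Only the permutations preserving the pairing contribute, each with `1`.
lemma pfaffianSum_pairSymplectic :
    pfaffianSum (pairSymplectic ι R) = (Fintype.card ι).factorial * 2 ^ Fintype.card ι := by
  have term_pairPerm : ∀ π ε, ((Perm.sign (pairPerm π ε) : ℤ) : R) *
      ∏ i, pairSymplectic ι R (pairPerm π ε (i, 0)) (pairPerm π ε (i, 1)) = 1 := by
    intro π ε
    simp only [pairSymplectic_apply_pairPerm, sign_pairPerm, Units.coe_prod, Int.cast_prod,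
      ← Finset.prod_mul_distrib, ← Int.cast_mul, ← Units.val_mul, Int.units_mul_self,
      Units.val_one, Int.cast_one, prod_const_one]
  have term_eq_zero : ∀ σ : Perm (ι × Fin 2), (∀ π ε, pairPerm π ε ≠ σ) →
      ((Perm.sign σ : ℤ) : R) * ∏ i, pairSymplectic ι R (σ (i, 0)) (σ (i, 1)) = 0 := by
    intro σ hσ
    obtain ⟨i, hi⟩ : ∃ i, (σ (i, 0)).1 ≠ (σ (i, 1)).1 := by
      by_contra! h
      obtain ⟨π, ε, rfl⟩ := exists_pairPerm_eq σ h
      exact hσ π ε rfl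
    refine mul_eq_zero_of_right _ (Finset.prod_eq_zero (mem_univ i) ?_)
    simp [pairSymplectic, one_apply_ne hi]
  rw [pfaffianSum, ← Finset.sum_of_injOn (s := univ)
    (fun p : Perm ι × (ι → Perm (Fin 2)) => pairPerm p.1 p.2) pairPerm_injective.injOn
    (fun _ _ => mem_univ _)
    (fun σ _ hσ => term_eq_zero σ fun π ε h => hσ ⟨(π, ε), by simp, h⟩)
    (fun p _ => (term_pairPerm p.1 p.2).symm)]
  simp [Fintype.card_perm]

end PfaffianSum

noncomputable def foldedVandermonde {R : Type*} [CommRing R] {M : ℕ} (l : Fin (2 * M) → R) :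
    Matrix (Fin M × Fin 2) (Fin M × Fin 2) R :=
  ((vandermonde l).submatrix id (finFoldPerm M)).submatrix (finPairEquiv M) (finPairEquiv M)

lemma det_foldedVandermonde {R : Type*} [CommRing R] {M : ℕ} (l : Fin (2 * M) → R) :
    (foldedVandermonde l).det = (vandermonde l).det := by
  rw [foldedVandermonde, det_submatrix_equiv_self, det_permute', sign_finFoldPerm]
  simp

lemma submatrix_finPairEquiv_eq_foldedVandermonde_mul {K : Type*} [Field K] {M : ℕ}
    (l : Fin (2 * M) → K) (hl : Function.Injective l) :
    (of fun m n : Fin (2 * M) => if m = n then 0 else (l n ^ M - l m ^ M) ^ 2 / (l n - l m)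
      ).submatrix (finPairEquiv M) (finPairEquiv M) =
      foldedVandermonde l * pairSymplectic (Fin M) K * (foldedVandermonde l)ᵀ := by
  ext x y
  set u := l (finPairEquiv M x)
  set v := l (finPairEquiv M y)
  rw [mul_pairSymplectic_mul_transpose_apply]
  simp only [foldedVandermonde, submatrix_apply, id, vandermonde_apply,
    finFoldPerm_finPairEquiv_zero, finFoldPerm_finPairEquiv_one, of_apply]
  rw [Fin.sum_univ_eq_sum_range
    (fun k => u ^ k * v ^ (2 * M - 1 - k) - u ^ (2 * M - 1 - k) * v ^ k)]
  split_ifs with hxy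
  · simp [u, v, hxy, mul_comm]
  · rw [div_eq_iff (sub_ne_zero.2 (hl.ne (Ne.symm hxy))), sum_pow_mul_pow_sub_mul_sub]

lemma pf_eq_pfaffianSum {M : ℕ} (A : Matrix (Fin (2 * M)) (Fin (2 * M)) ℝ) :
    pf A = 1 / (2 ^ M * M.factorial) *
      pfaffianSum (A.submatrix (finPairEquiv M) (finPairEquiv M)) := by
  rw [pf, pfaffianSum]
  congr 1
  refine (Fintype.sum_equiv (finPairEquiv M).permCongr _ _ fun τ => ?_).symm
  have even : ∀ (m : Fin M) h, (finPairEquiv M).symm ⟨2 * m, h⟩ = (m, 0) :=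
    fun m _ => (finPairEquiv M).symm_apply_eq.2 (Fin.ext (by simp))
  have odd : ∀ (m : Fin M) h, (finPairEquiv M).symm ⟨2 * m + 1, h⟩ = (m, 1) :=
    fun m _ => (finPairEquiv M).symm_apply_eq.2 (Fin.ext (by simp))
  simp only [Perm.sign_permCongr, permCongr_apply, even, odd, submatrix_apply]

end Matrix

/-- For `N = 2M` distinct reals `λ_1, …, λ_N` and the antisymmetric matrix
`S(λ) = [(λ_n^M - λ_m^M)^2 / (λ_n - λ_m)]` (with zero diagonal),
`Pf S(λ) = ∏_{m<n} (λ_n - λ_m)`. -/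
theorem stmt2 (M : ℕ) (l : Fin (2*M) → ℝ) (hl : Function.Injective l) :
    pf (Matrix.of fun m n : Fin (2*M) =>
        if m = n then 0 else (l n ^ M - l m ^ M)^2 / (l n - l m)) =
      ∏ q ∈ Finset.univ.filter (fun q : Fin (2*M) × Fin (2*M) => q.1 < q.2),
        (l q.2 - l q.1) := by
  rw [pf_eq_pfaffianSum, submatrix_finPairEquiv_eq_foldedVandermonde_mul l hl,
    pfaffianSum_mul_mul_transpose, pfaffianSum_pairSymplectic, det_foldedVandermonde,
    det_vandermonde, Finset.prod_filter, Fintype.prod_prod_type]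
  simp_rw [← Finset.prod_filter, Finset.filter_lt_eq_Ioi]
  rw [Fintype.card_fin]
  field_simp
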